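/- Let r be a positive integer and let f : 𝕋 → 𝕋 be the doubling map f(x) = 2x. For any two distinct points i/2^r and j/2^r with 0 ≤ i < j ≤ 2^r − 1, there exists n ∈ {0, …, r−1} such that d(f^n(i/2^r), f^n(j/2^r)) > 1/3. -/

import Mathlib

/-!
Put `x = (j - i) / 2 ^ r`, a nonzero point of the circle with `2 ^ r • x = 0`; the distance at
time `n` is `‖2 ^ n • x‖`. On a circle of period `p`, doubling a point of norm `s` gives a point
of norm at least `min (2 * s) (p - 2 * s)`. So if `‖2 ^ n • x‖ ≤ p / 3` for all `n < r`, induction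
gives `‖2 ^ r • x‖ ≥ min (2 ^ r * ‖x‖) (p / 3) > 0`, which is impossible.
-/

/-- The doubling map `x ↦ 2x` on the circle `ℝ/ℤ`. -/
noncomputable def doubling : UnitAddCircle → UnitAddCircle := fun x => (2 : ℕ) • x

namespace AddCircle

variable {p : ℝ}

theorem min_two_mul_norm_sub_le_norm_two_nsmul (x : AddCircle p) :
    min (2 * ‖x‖) (p - 2 * ‖x‖) ≤ ‖(2 : ℕ) • x‖ := by
  induction x using QuotientAddGroup.induction_on with
  | H s =>
  set t := s - round (p⁻¹ * s) * p
  set m := 2 * round (p⁻¹ * s) - round (p⁻¹ * (2 * s))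
  have hx : ‖(s : AddCircle p)‖ = |t| := norm_eq p
  have h2x : ‖(2 : ℕ) • (s : AddCircle p)‖ = |2 * t + m * p| := by
    rw [← coe_nsmul, nsmul_eq_mul, Nat.cast_ofNat, norm_eq p]
    push_cast [t, m]
    ring_nf
  rw [hx, h2x]
  by_cases hm : m = 0
  · rw [hm, Int.cast_zero, zero_mul, add_zero, abs_mul, abs_two]
    exact min_le_left _ _
  · -- the representative `2 * t` is off by a nonzero multiple of the period
    have hp : p ≤ |m * p| := by
      rw [abs_mul]
      exact (le_abs_self p).trans
        (le_mul_of_one_le_left (abs_nonneg p) (by exact_mod_cast Int.one_le_abs hm))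
    have := abs_add_le (2 * t + m * p) (-(2 * t))
    rw [abs_neg, abs_mul, abs_two, add_neg_cancel_comm] at this
    exact min_le_of_right_le (by linarith)

theorem min_two_pow_mul_norm_le_norm_two_pow_nsmul {x : AddCircle p} (hp : 0 ≤ p) {N : ℕ}
    (hN : ∀ n < N, ‖2 ^ n • x‖ ≤ p / 3) :
    ∀ n ≤ N, min (2 ^ n * ‖x‖) (p / 3) ≤ ‖2 ^ n • x‖ := by
  intro n
  induction n with
  | zero => simp
  | succ n ih =>
    intro hn
    have hle := hN n (by omega)
    have hprev := ih (by omega)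
    have hdouble := min_two_mul_norm_sub_le_norm_two_nsmul (2 ^ n • x)
    rw [pow_succ' (2 : ℕ), mul_smul, pow_succ', mul_assoc]
    refine le_trans (le_min ?_ ?_) hdouble
    · rcases min_le_iff.mp hprev with h | h
      · exact min_le_of_left_le (by linarith)
      · exact min_le_of_right_le (by linarith)
    · exact min_le_of_right_le (by linarith)

theorem exists_lt_norm_two_pow_nsmul {x : AddCircle p} (hp : 0 < p) (hx : x ≠ 0) {r : ℕ}
    (hr : 2 ^ r • x = 0) : ∃ n < r, p / 3 < ‖2 ^ n • x‖ := by
  by_contra! h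
  have := min_two_pow_mul_norm_le_norm_two_pow_nsmul hp.le h r le_rfl
  rw [hr, norm_zero] at this
  have : 0 < min (2 ^ r * ‖x‖) (p / 3) := lt_min (by positivity) (by positivity)
  linarith

end AddCircle

theorem doubling_iterate (n : ℕ) : doubling^[n] = (2 ^ n • ·) := smul_iterate 2 n

theorem doubling_separates_dyadic_general (r : ℕ) (i j : ℕ) (hij : i < j)
    (hj : j ≤ 2 ^ r - 1) :
    ∃ n < r, 1/3 < dist (doubling^[n] ((i / 2 ^ r : ℝ) : UnitAddCircle))
                        (doubling^[n] ((j / 2 ^ r : ℝ) : UnitAddCircle)) := by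
  set x : UnitAddCircle := ((((j : ℝ) - i) / 2 ^ r : ℝ) : UnitAddCircle)
  have hpos : (0 : ℝ) < 2 ^ r := by positivity
  have hdiff : ((j / 2 ^ r : ℝ) : UnitAddCircle) - ((i / 2 ^ r : ℝ) : UnitAddCircle) = x := by
    rw [← AddCircle.coe_sub, ← sub_div]
  have hx : x ≠ 0 := by
    have hji : (0 : ℝ) < j - i := by simpa using hij
    have hj' : (j : ℝ) - i < 2 ^ r := by
      have : (j : ℝ) < 2 ^ r := by exact_mod_cast (by omega : j < 2 ^ r)
      linarith [i.cast_nonneg (α := ℝ)]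
    rw [Ne, AddCircle.coe_eq_zero_iff_of_mem_Ico ⟨by positivity, (div_lt_one hpos).mpr hj'⟩]
    positivity
  have hrx : 2 ^ r • x = 0 := by
    rw [← AddCircle.coe_nsmul, AddCircle.coe_eq_zero_iff]
    refine ⟨j - i, ?_⟩
    rw [zsmul_eq_mul, nsmul_eq_mul]
    push_cast
    field_simp
  obtain ⟨n, hn, hsep⟩ := AddCircle.exists_lt_norm_two_pow_nsmul one_pos hx hrx
  refine ⟨n, hn, ?_⟩
  rwa [doubling_iterate, dist_comm, dist_eq_norm, ← smul_sub, hdiff]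

/-- Let `r` be a positive integer and `f` the doubling map on the circle.  For any two
distinct points `i/2^r` and `j/2^r` with `0 ≤ i < j ≤ 2^r - 1`, there is
`n ∈ {0, …, r-1}` with `d(f^n(i/2^r), f^n(j/2^r)) > 1/3`. -/
theorem doubling_separates_dyadic (r : ℕ) (hr : 0 < r) (i j : ℕ) (hij : i < j)
    (hj : j ≤ 2 ^ r - 1) :
    ∃ n < r, 1/3 < dist (doubling^[n] ((i / 2 ^ r : ℝ) : UnitAddCircle))
                        (doubling^[n] ((j / 2 ^ r : ℝ) : UnitAddCircle)) :=
  doubling_separates_dyadic_general r i j hij hj
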